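/- On ℝ^{2m} ≅ ℂᵐ with coordinates z = x + iξ, the function ρ(x,ξ) = |ξ|² is smooth and strictly plurisubharmonic, and √ρ(x,ξ) = |ξ| is plurisubharmonic on ℂᵐ and satisfies the homogeneous complex Monge–Ampère equation (i∂∂̄|ξ|)^m = 0 on {ξ ≠ 0} when m ≥ 2; equivalently, the complex Hessian matrix (∂²|ξ|/∂z_j∂z̄_k) is positive semidefinite with determinant zero on {ξ ≠ 0}. -/

import Mathlib

open Complex

/-- Wirtinger derivative `∂/∂z_j` on ℂᵐ. -/
noncomputable def wdz {m : ℕ} (j : Fin m) (u : (Fin m → ℂ) → ℂ) :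
    (Fin m → ℂ) → ℂ :=
  fun z => (fderiv ℝ u z (Pi.single j 1) - Complex.I * fderiv ℝ u z (Pi.single j Complex.I)) / 2

/-- Conjugate Wirtinger derivative `∂/∂z̄_j` on ℂᵐ. -/
noncomputable def wdzbar {m : ℕ} (j : Fin m) (u : (Fin m → ℂ) → ℂ) :
    (Fin m → ℂ) → ℂ :=
  fun z => (fderiv ℝ u z (Pi.single j 1) + Complex.I * fderiv ℝ u z (Pi.single j Complex.I)) / 2

private noncomputable def LL {m : ℕ} (j : Fin m) : (Fin m → ℂ) →L[ℝ] ℝ :=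
  Complex.imCLM.comp (ContinuousLinearMap.proj j)

private lemma LL_apply {m : ℕ} (j : Fin m) (v : Fin m → ℂ) : LL j v = (v j).im := rfl

private lemma LL_single {m : ℕ} (j k : Fin m) (a : ℂ) :
    LL j (Pi.single k a) = if j = k then a.im else 0 := by
  rw [LL_apply, Pi.single_apply]; split <;> simp

private noncomputable def Drho {m : ℕ} (z : Fin m → ℂ) : (Fin m → ℂ) →L[ℝ] ℝ :=
  ∑ j, (2 * (z j).im) • LL j

private lemma Drho_apply {m : ℕ} (z v : Fin m → ℂ) :
    Drho z v = ∑ j, 2 * (z j).im * (v j).im := by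
  simp [Drho, ContinuousLinearMap.sum_apply, LL_apply, mul_assoc]

private lemma Drho_single_one {m : ℕ} (z : Fin m → ℂ) (k : Fin m) :
    Drho z (Pi.single k 1) = 0 := by
  simp [Drho, ContinuousLinearMap.sum_apply, LL_single]

private lemma Drho_single_I {m : ℕ} (z : Fin m → ℂ) (k : Fin m) :
    Drho z (Pi.single k Complex.I) = 2 * (z k).im := by
  simp [Drho, ContinuousLinearMap.sum_apply, LL_single]

private lemma hasFDerivAt_rho {m : ℕ} (z : Fin m → ℂ) :
    HasFDerivAt (fun z : Fin m → ℂ => ∑ j, (z j).im ^ 2) (Drho z) z := by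
  apply HasFDerivAt.fun_sum
  intro j _
  have h := ((LL (m := m) j).hasFDerivAt (x := z)).mul ((LL j).hasFDerivAt (x := z))
  refine (h.congr_of_eventuallyEq (Filter.EventuallyEq.of_eq ?_)).congr_fderiv ?_
  · funext y; simp [LL_apply, sq]
  · ext v; simp [LL_apply]; ring

private lemma hasFDerivAt_P {m : ℕ} (z : Fin m → ℂ) :
    HasFDerivAt (fun z : Fin m → ℂ => ((∑ j, (z j).im ^ 2 : ℝ) : ℂ))
      (Complex.ofRealCLM.comp (Drho z)) z :=
  Complex.ofRealCLM.hasFDerivAt.comp z (hasFDerivAt_rho z)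

private lemma wdzbar_P {m : ℕ} (k : Fin m) :
    wdzbar k (fun z : Fin m → ℂ => ((∑ j, (z j).im ^ 2 : ℝ) : ℂ))
      = fun z => Complex.I * ((z k).im : ℝ) := by
  funext z
  unfold wdzbar
  rw [(hasFDerivAt_P z).fderiv]
  simp [ContinuousLinearMap.comp_apply, Drho_single_one, Drho_single_I]
  push_cast
  ring

private lemma hessP {m : ℕ} (j k : Fin m) (z : Fin m → ℂ) :
    wdz j (wdzbar k (fun z : Fin m → ℂ => ((∑ i, (z i).im ^ 2 : ℝ) : ℂ))) z
      = if j = k then (1/2 : ℂ) else 0 := by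
  rw [wdzbar_P]
  unfold wdz
  have h : HasFDerivAt (fun z : Fin m → ℂ => Complex.I * ((z k).im : ℝ))
      (Complex.I • (Complex.ofRealCLM.comp (LL k))) z :=
    (Complex.ofRealCLM.hasFDerivAt.comp z ((LL k).hasFDerivAt)).const_mul Complex.I
  rw [h.fderiv]
  simp [ContinuousLinearMap.smul_apply, ContinuousLinearMap.comp_apply, LL_single]
  split <;> simp_all [Complex.ext_iff, eq_comm] <;> norm_num

private lemma rho_pos {m : ℕ} {z : Fin m → ℂ} (h : (∑ j, (z j).im ^ 2) ≠ 0) :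
    0 < ∑ j, (z j).im ^ 2 :=
  lt_of_le_of_ne (Finset.sum_nonneg fun j _ => sq_nonneg _) (Ne.symm h)

private lemma hasFDerivAt_Q {m : ℕ} (z : Fin m → ℂ) (h : (∑ j, (z j).im ^ 2) ≠ 0) :
    HasFDerivAt (fun z : Fin m → ℂ => ((Real.sqrt (∑ j, (z j).im ^ 2) : ℝ) : ℂ))
      (Complex.ofRealCLM.comp
        ((1 / (2 * Real.sqrt (∑ j, (z j).im ^ 2))) • Drho z)) z :=
  Complex.ofRealCLM.hasFDerivAt.comp z
    ((Real.hasDerivAt_sqrt h).comp_hasFDerivAt z (hasFDerivAt_rho z))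

private lemma wdzbar_Q {m : ℕ} (k : Fin m) (z : Fin m → ℂ) (h : (∑ j, (z j).im ^ 2) ≠ 0) :
    wdzbar k (fun z : Fin m → ℂ => ((Real.sqrt (∑ j, (z j).im ^ 2) : ℝ) : ℂ)) z
      = Complex.I * (((z k).im * (Real.sqrt (∑ j, (z j).im ^ 2))⁻¹ : ℝ) : ℂ) / 2 := by
  unfold wdzbar
  rw [(hasFDerivAt_Q z h).fderiv]
  have hs : Real.sqrt (∑ j, (z j).im ^ 2) ≠ 0 :=
    ne_of_gt (Real.sqrt_pos.mpr (rho_pos h))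
  simp [ContinuousLinearMap.comp_apply, ContinuousLinearMap.smul_apply,
    Drho_single_one, Drho_single_I]
  push_cast
  field_simp

private lemma hessQ {m : ℕ} (j k : Fin m) (z : Fin m → ℂ) (h : (∑ i, (z i).im ^ 2) ≠ 0) :
    wdz j (wdzbar k (fun z : Fin m → ℂ => ((Real.sqrt (∑ i, (z i).im ^ 2) : ℝ) : ℂ))) z
      = ((((if j = k then (Real.sqrt (∑ i, (z i).im ^ 2))⁻¹ else 0)
          - (z j).im * (z k).im * ((Real.sqrt (∑ i, (z i).im ^ 2))⁻¹) ^ 3) / 4 : ℝ) : ℂ) := by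
  set s := Real.sqrt (∑ i, (z i).im ^ 2) with hs_def
  have hr : 0 < ∑ i, (z i).im ^ 2 := rho_pos h
  have hs : s ≠ 0 := ne_of_gt (Real.sqrt_pos.mpr hr)
  -- the function G equal to wdzbar k Q near z
  set G : (Fin m → ℂ) → ℂ := fun z' =>
    Complex.I * (((z' k).im * (Real.sqrt (∑ i, (z' i).im ^ 2))⁻¹ : ℝ) : ℂ) / 2 with hG_def
  have heq : wdzbar k (fun z : Fin m → ℂ => ((Real.sqrt (∑ i, (z i).im ^ 2) : ℝ) : ℂ)) =ᶠ[nhds z] G := by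
    have hopen : IsOpen {z' : Fin m → ℂ | (∑ i, (z' i).im ^ 2) ≠ 0} := by
      have hc : Continuous fun z' : Fin m → ℂ => ∑ i, (z' i).im ^ 2 := by fun_prop
      exact isOpen_ne.preimage hc
    filter_upwards [hopen.mem_nhds h] with z' hz'
    exact wdzbar_Q k z' hz'
  -- derivative of G at z
  have hinv : HasFDerivAt (fun z' : Fin m → ℂ => (Real.sqrt (∑ i, (z' i).im ^ 2))⁻¹)
      ((-(1 / (2 * s)) / s ^ 2) • Drho z) z :=
    by have := ((Real.hasDerivAt_sqrt h).inv hs).comp_hasFDerivAt z (hasFDerivAt_rho z); exact this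
  have hmul : HasFDerivAt (fun z' : Fin m → ℂ =>
      (z' k).im * (Real.sqrt (∑ i, (z' i).im ^ 2))⁻¹)
      ((z k).im • ((-(1 / (2 * s)) / s ^ 2) • Drho z) + s⁻¹ • LL k) z :=
    ((LL k).hasFDerivAt (x := z)).mul hinv
  have hG : HasFDerivAt G
      ((2 : ℂ)⁻¹ • Complex.I • (Complex.ofRealCLM.comp
        ((z k).im • ((-(1 / (2 * s)) / s ^ 2) • Drho z) + s⁻¹ • LL k))) z := by
    have h1 := (Complex.ofRealCLM.hasFDerivAt.comp z hmul).const_mul Complex.I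
    have h2 := h1.const_mul (2⁻¹ : ℂ)
    refine h2.congr_of_eventuallyEq (Filter.EventuallyEq.of_eq ?_)
    · funext y
      simp only [hG_def, Function.comp, Complex.ofRealCLM_apply]
      try ring
  unfold wdz
  rw [heq.fderiv_eq, hG.fderiv]
  simp [ContinuousLinearMap.smul_apply, ContinuousLinearMap.comp_apply,
    ContinuousLinearMap.add_apply, Drho_single_one, Drho_single_I, LL_single]
  push_cast
  split <;> rename_i hkj
  · subst hkj
    rw [if_pos rfl]
    push_cast
    ring_nf
    rw [Complex.I_sq]
    field_simp
    try ring
  · rw [if_neg (fun hh => hkj hh.symm)]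
    push_cast
    ring_nf
    rw [Complex.I_sq]
    field_simp
    try ring

private lemma sumP {m : ℕ} (c : Fin m → ℂ) :
    ∑ j, ∑ k, (starRingEnd ℂ) (c j) * (if j = k then (1/2 : ℂ) else 0) * c k
      = (((∑ j, Complex.normSq (c j)) / 2 : ℝ) : ℂ) := by
  push_cast
  rw [Finset.sum_div]
  apply Finset.sum_congr rfl
  intro j _
  rw [Finset.sum_eq_single j]
  · rw [if_pos rfl, show (starRingEnd ℂ) (c j) * (1/2) * c j
      = (c j * (starRingEnd ℂ) (c j)) * (1/2) from by ring, Complex.mul_conj]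
    ring
  · intro b _ hb
    rw [if_neg (fun hh => hb hh.symm), mul_zero, zero_mul]
  · intro hj; exact absurd (Finset.mem_univ j) hj

private lemma sumQ {m : ℕ} (z : Fin m → ℂ) (c : Fin m → ℂ) (s : ℝ) :
    ∑ j, ∑ k, (starRingEnd ℂ) (c j) *
      (((((if j = k then s⁻¹ else 0) - (z j).im * (z k).im * (s⁻¹) ^ 3) / 4 : ℝ)) : ℂ) * c k
    = (((s⁻¹ * ∑ j, Complex.normSq (c j)
        - (s⁻¹) ^ 3 * Complex.normSq (∑ j, ((z j).im : ℂ) * c j)) / 4 : ℝ) : ℂ) := by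
  have key : ∀ j k, (starRingEnd ℂ) (c j) *
      (((((if j = k then s⁻¹ else 0) - (z j).im * (z k).im * (s⁻¹) ^ 3) / 4 : ℝ)) : ℂ) * c k
      = (if j = k then ((s⁻¹ : ℂ)/4) * ((starRingEnd ℂ) (c j) * c k) else 0)
        - ((s⁻¹ : ℂ) ^ 3 / 4) * (((starRingEnd ℂ) (c j) * ((z j).im : ℂ)) *
            ((((z k).im : ℂ)) * c k)) := by
    intro j k
    split <;> push_cast <;> ring
  simp only [key, Finset.sum_sub_distrib]
  have h1 : ∑ j, ∑ k, (if j = k then ((s⁻¹ : ℂ)/4) * ((starRingEnd ℂ) (c j) * c k) else 0)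
      = ((s⁻¹ : ℂ)/4) * ∑ j, ((Complex.normSq (c j) : ℝ) : ℂ) := by
    rw [Finset.mul_sum]
    apply Finset.sum_congr rfl
    intro j _
    rw [Finset.sum_ite_eq]
    simp only [Finset.mem_univ, if_true]
    rw [show (starRingEnd ℂ) (c j) * c j = ((Complex.normSq (c j) : ℝ) : ℂ) from by
      rw [mul_comm, Complex.mul_conj]]
  have h2 : ∑ j, ∑ k, ((s⁻¹ : ℂ) ^ 3 / 4) * (((starRingEnd ℂ) (c j) * ((z j).im : ℂ)) *
        ((((z k).im : ℂ)) * c k))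
      = ((s⁻¹ : ℂ) ^ 3 / 4) * ((Complex.normSq (∑ j, ((z j).im : ℂ) * c j) : ℝ) : ℂ) := by
    simp only [← Finset.mul_sum]
    rw [← Finset.sum_mul]
    congr 1
    have hT : ∑ j, (starRingEnd ℂ) (c j) * ((z j).im : ℂ)
        = (starRingEnd ℂ) (∑ j, ((z j).im : ℂ) * c j) := by
      rw [map_sum]
      apply Finset.sum_congr rfl
      intro j _
      rw [map_mul, Complex.conj_ofReal]
      ring
    rw [hT, mul_comm, Complex.mul_conj]
  rw [h1, h2]
  push_cast
  ring

private lemma cs {m : ℕ} (z c : Fin m → ℂ) :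
    Complex.normSq (∑ j, ((z j).im : ℂ) * c j)
      ≤ (∑ j, (z j).im ^ 2) * ∑ j, Complex.normSq (c j) := by
  have h1 : ‖(∑ j, ((z j).im : ℂ) * c j)‖
      ≤ ∑ j, |(z j).im| * ‖(c j)‖ := by
    refine le_trans (norm_sum_le _ _) (le_of_eq ?_)
    apply Finset.sum_congr rfl
    intro j _
    rw [norm_mul, Complex.norm_real, Real.norm_eq_abs]
  calc Complex.normSq (∑ j, ((z j).im : ℂ) * c j)
      = ‖(∑ j, ((z j).im : ℂ) * c j)‖ ^ 2 := (Complex.sq_norm _).symm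
    _ ≤ (∑ j, |(z j).im| * ‖(c j)‖) ^ 2 := by
        exact pow_le_pow_left₀ (norm_nonneg _) h1 2
    _ ≤ (∑ j, |(z j).im| ^ 2) * ∑ j, ‖(c j)‖ ^ 2 :=
        Finset.sum_mul_sq_le_sq_mul_sq _ _ _
    _ = (∑ j, (z j).im ^ 2) * ∑ j, Complex.normSq (c j) := by
        congr 1 <;> (apply Finset.sum_congr rfl; intro j _; simp [sq_abs, Complex.sq_norm])


/-- On ℂᵐ with `z = x + iξ`, the function `ρ(x,ξ) = |ξ|²` is smooth
  and strictly plurisubharmonic, and `√ρ = |ξ|` is plurisubharmonic on `{ξ ≠ 0}`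
  satisfying the homogeneous complex Monge–Ampère equation `(i∂∂̄|ξ|)^m = 0` there
  when `m ≥ 2`: the complex Hessian `(∂²|ξ|/∂z_j∂z̄_k)` is positive semidefinite
  with determinant zero on `{ξ ≠ 0}`. -/
theorem stmt16 (m : ℕ) (hm : 2 ≤ m)
    (ρ : (Fin m → ℂ) → ℝ) (hρ : ρ = fun z => ∑ j, (z j).im ^ 2)
    (P : (Fin m → ℂ) → ℂ) (hP : P = fun z => ((ρ z : ℝ) : ℂ))
    (Q : (Fin m → ℂ) → ℂ) (hQ : Q = fun z => ((Real.sqrt (ρ z) : ℝ) : ℂ)) :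
    ContDiff ℝ (⊤ : ℕ∞) ρ ∧
    (∀ z : Fin m → ℂ, ∀ c : Fin m → ℂ, c ≠ 0 →
      0 < (∑ j, ∑ k, (starRingEnd ℂ) (c j) * wdz j (wdzbar k P) z * c k).re ∧
      (∑ j, ∑ k, (starRingEnd ℂ) (c j) * wdz j (wdzbar k P) z * c k).im = 0) ∧
    (∀ z : Fin m → ℂ, ρ z ≠ 0 →
      (∀ c : Fin m → ℂ,
        0 ≤ (∑ j, ∑ k, (starRingEnd ℂ) (c j) * wdz j (wdzbar k Q) z * c k).re ∧
        (∑ j, ∑ k, (starRingEnd ℂ) (c j) * wdz j (wdzbar k Q) z * c k).im = 0) ∧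
      Matrix.det (Matrix.of fun j k => wdz j (wdzbar k Q) z) = 0) := by
  subst hρ hP hQ
  refine ⟨?_, ?_, ?_⟩
  · exact ContDiff.sum fun j _ => ContDiff.pow (Complex.imCLM.contDiff.comp (contDiff_pi.mp contDiff_id j)) 2
  · intro z c hc
    have hsum : (∑ j, ∑ k, (starRingEnd ℂ) (c j) * wdz j (wdzbar k
        (fun z : Fin m → ℂ => ((∑ i, (z i).im ^ 2 : ℝ) : ℂ))) z * c k)
        = (((∑ j, Complex.normSq (c j)) / 2 : ℝ) : ℂ) := by
      rw [← sumP c]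
      apply Finset.sum_congr rfl; intro j _
      apply Finset.sum_congr rfl; intro k _
      rw [hessP]
    beta_reduce
    rw [hsum]
    obtain ⟨j0, hj0⟩ := Function.ne_iff.mp hc
    constructor
    · simp only [Complex.ofReal_re]
      apply div_pos _ two_pos
      exact Finset.sum_pos' (fun j _ => Complex.normSq_nonneg _)
        ⟨j0, Finset.mem_univ _, Complex.normSq_pos.mpr hj0⟩
    · simp
  · intro z hz
    beta_reduce at hz
    set s := Real.sqrt (∑ i, (z i).im ^ 2) with hs_def
    have hr : 0 < ∑ i, (z i).im ^ 2 := rho_pos hz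
    have hs : 0 < s := Real.sqrt_pos.mpr hr
    have hs2 : s ^ 2 = ∑ i, (z i).im ^ 2 := Real.sq_sqrt hr.le
    constructor
    · intro c
      have hsum : (∑ j, ∑ k, (starRingEnd ℂ) (c j) * wdz j (wdzbar k
          (fun z : Fin m → ℂ => ((Real.sqrt (∑ i, (z i).im ^ 2) : ℝ) : ℂ))) z * c k)
          = (((s⁻¹ * ∑ j, Complex.normSq (c j)
              - (s⁻¹) ^ 3 * Complex.normSq (∑ j, ((z j).im : ℂ) * c j)) / 4 : ℝ) : ℂ) := by
        rw [← sumQ z c s]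
        apply Finset.sum_congr rfl; intro j _
        apply Finset.sum_congr rfl; intro k _
        rw [hessQ j k z hz]
      beta_reduce
      rw [hsum]
      constructor
      · simp only [Complex.ofReal_re]
        apply div_nonneg _ (by norm_num)
        rw [sub_nonneg]
        calc (s⁻¹) ^ 3 * Complex.normSq (∑ j, ((z j).im : ℂ) * c j)
            ≤ (s⁻¹) ^ 3 * ((∑ i, (z i).im ^ 2) * ∑ j, Complex.normSq (c j)) := by
              apply mul_le_mul_of_nonneg_left (cs z c) (by positivity)
          _ = s⁻¹ * ∑ j, Complex.normSq (c j) := by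
              rw [← hs2]; field_simp
      · exact Complex.ofReal_im _
    · beta_reduce
      rw [← Matrix.exists_mulVec_eq_zero_iff]
      refine ⟨fun j => (((z j).im : ℝ) : ℂ), ?_, ?_⟩
      · intro h0
        apply hz
        apply Finset.sum_eq_zero
        intro j _
        have := congrFun h0 j
        simp only [Pi.zero_apply, Complex.ofReal_eq_zero] at this
        rw [this]; ring
      · funext j
        simp only [Matrix.mulVec, Matrix.of_apply, dotProduct, Pi.zero_apply]
        have : ∀ k, wdz j (wdzbar k
            (fun z : Fin m → ℂ => ((Real.sqrt (∑ i, (z i).im ^ 2) : ℝ) : ℂ))) z * (((z k).im : ℝ) : ℂ)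
            = (((((if j = k then s⁻¹ * (z k).im else 0)
                - (z j).im * ((z k).im * (z k).im) * (s⁻¹) ^ 3) / 4 : ℝ)) : ℂ) := by
          intro k
          rw [hessQ j k z hz]
          split <;>
            simp only [Complex.ofReal_mul, Complex.ofReal_inv, Complex.ofReal_pow,
              Complex.ofReal_zero, Complex.ofReal_div, Complex.ofReal_sub,
              Complex.ofReal_ofNat] <;> ring
        simp only [this]
        rw [← Complex.ofReal_sum]
        rw [Complex.ofReal_eq_zero]
        have hsplit : ∀ k : Fin m, (((if j = k then s⁻¹ * (z k).im else 0)
            - (z j).im * ((z k).im * (z k).im) * (s⁻¹) ^ 3) / 4)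
            = (if j = k then s⁻¹ * (z k).im / 4 else 0)
              - ((z j).im * (s⁻¹) ^ 3 / 4) * (z k).im ^ 2 := by
          intro k; split <;> ring
        simp only [hsplit, Finset.sum_sub_distrib, Finset.sum_ite_eq, Finset.mem_univ, if_true,
          ← Finset.mul_sum]
        rw [← hs2]
        field_simp
        ring
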